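/- arXiv:2603.10733 — 2 statements merged into one kernel-verified Lean document; each statement's English description precedes it below -/
import Mathlib

section
/- Over an even alphabet {a,b} (both a and b even), every word u in the tree T of strong bispecial f-smooth words has |u|_a = |u|_b = |u|/2; consequently all words in generation T_i have the same length l_i = L_i = c·((a+b)/2)^i − c, where c = 4a/(a+b−2). -/
namespace SmoothWords

/-- Complement of a letter over the alphabet `{a, b}`. -/
def flip (a b c : ℕ) : ℕ := if c = a then b else a

/-- Run-length encoding of a finite word: list of (letter, exponent) pairs. -/
def runs : List ℕ → List (ℕ × ℕ)
  | [] => []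
  | c :: t =>
    match runs t with
    | [] => [(c, 1)]
    | (d, k) :: r => if c = d then (c, k + 1) :: r else (c, 1) :: (d, k) :: r

/-- The exponents of the canonical run-length factorization. -/
def exps (u : List ℕ) : List ℕ := (runs u).map Prod.snd

/-- Boundary cut used by the finite derivatives. -/
def cut (a b p : ℕ) : List ℕ := if p ≤ a then [] else [b]

/-- The finite derivative `D_f`. -/
def Df (a b : ℕ) (u : List ℕ) : List ℕ :=
  match exps u with
  | [] => []
  | [p] => cut a b p
  | p :: q :: rest =>
      cut a b p ++ (q :: rest).dropLast ++ cut a b ((q :: rest).getLast (List.cons_ne_nil _ _))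

/-- `u` is f-derivable: letters in `{a,b}`, inner run exponents in `{a,b}`,
boundary run exponents in `[1, b]`. -/
def Cf1 (a b : ℕ) (u : List ℕ) : Prop :=
  (∀ c ∈ u, c = a ∨ c = b) ∧
  (∀ p ∈ exps u, p ≤ b) ∧
  (∀ p ∈ ((exps u).drop 1).dropLast, p = a ∨ p = b)

/-- `u` is f-smooth: all iterated finite derivatives are f-derivable
(equivalently, some iterate is `ε`). -/
def FSmooth (a b : ℕ) (u : List ℕ) : Prop := ∀ n, Cf1 a b ((Df a b)^[n] u)

/-- The r-derivative `D_r`: keeps all exponents but cuts the last one. -/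
def Dr (a b : ℕ) (u : List ℕ) : List ℕ :=
  match exps u with
  | [] => []
  | p :: rest =>
      (p :: rest).dropLast ++ cut a b ((p :: rest).getLast (List.cons_ne_nil _ _))

/-- `u` is r-derivable. -/
def Cr1 (a b : ℕ) (u : List ℕ) : Prop :=
  (∀ c ∈ u, c = a ∨ c = b) ∧
  (∀ p ∈ exps u, p ≤ b) ∧
  (∀ p ∈ (exps u).dropLast, p = a ∨ p = b)

/-- `u` is r-smooth. -/
def RSmooth (a b : ℕ) (u : List ℕ) : Prop := ∀ n, Cr1 a b ((Dr a b)^[n] u)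

/-- `y` is the derivative of the infinite word `x`: `x = x₀^{y₀} x̄₀^{y₁} x₀^{y₂} ⋯`
with all `y i ∈ {a, b}` (in particular `x` is derivable). -/
def DerivesTo (a b : ℕ) (x y : ℕ → ℕ) : Prop :=
  (∀ i, y i = a ∨ y i = b) ∧
  ∃ S : ℕ → ℕ, S 0 = 0 ∧ (∀ k, S (k + 1) = S k + y k) ∧
    ∀ k i, S k ≤ i → i < S (k + 1) → x i = (flip a b)^[k] (x 0)

/-- An infinite word over `{a,b}` is smooth if it is infinitely derivable. -/
def Smooth (a b : ℕ) (x : ℕ → ℕ) : Prop :=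
  (∀ i, x i = a ∨ x i = b) ∧
  ∃ X : ℕ → ℕ → ℕ, X 0 = x ∧ ∀ n, DerivesTo a b (X n) (X (n + 1))

/-- Auxiliary for the f-primitives: alternate blocks with given exponents,
ending with a block of exponent `a`. -/
def pfAux (a b : ℕ) : ℕ → List ℕ → List ℕ
  | c, [] => List.replicate a c
  | c, p :: t => List.replicate p c ++ pfAux a b (flip a b c) t

/-- The f-primitive `P_{f,c}`. -/
def Pf (a b c : ℕ) (u : List ℕ) : List ℕ :=
  if c = a then List.replicate a a ++ pfAux a b b u
  else (List.replicate a a ++ pfAux a b b u).map (flip a b)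

/-- `u` is a bispecial f-smooth word. -/
def Bispecial (a b : ℕ) (u : List ℕ) : Prop :=
  FSmooth a b u ∧ FSmooth a b (a :: u) ∧ FSmooth a b (b :: u) ∧
    FSmooth a b (u ++ [a]) ∧ FSmooth a b (u ++ [b])

open Classical in
/-- The multiplicity `m(u) = |{aua,aub,bua,bub} ∩ C_f^∞| - 3`. -/
noncomputable def mult (a b : ℕ) (u : List ℕ) : ℤ :=
  (if FSmooth a b (a :: u ++ [a]) then 1 else 0) +
  (if FSmooth a b (a :: u ++ [b]) then 1 else 0) +
  (if FSmooth a b (b :: u ++ [a]) then 1 else 0) +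
  (if FSmooth a b (b :: u ++ [b]) then 1 else 0) - 3

/-- The vertex of the tree `T` indexed by the path `s` from the root `ε`
(`false` = child by `P_{f,a}`, `true` = child by `P_{f,b}`). -/
def node (a b : ℕ) : List Bool → List ℕ
  | [] => []
  | c :: s => Pf a b (if c then b else a) (node a b s)

/-- Total length `f(i) = ∑_{u ∈ T_i} |u|` of generation `i` of `T`. -/
def totalLen (a b i : ℕ) : ℕ :=
  ∑ s : Fin i → Bool, (node a b (List.ofFn s)).length

/-- Generation `i` of the tree `T`, as a finite set of words. -/
def genSet (a b i : ℕ) : Finset (List ℕ) :=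
  (Finset.univ : Finset (Fin i → Bool)).image fun s => node a b (List.ofFn s)

/-- `b_i(n) = |T_i ∩ A^n|`. -/
def bfun (a b i n : ℕ) : ℕ := ((genSet a b i).filter fun u => u.length = n).card

/-- `s_i(n) = ∑_{m<n} b_i(m)`. -/
def sfun (a b i n : ℕ) : ℕ := ∑ m ∈ Finset.range n, bfun a b i m

/-- `p_i(n) = ∑_{m<n} s_i(m)`. -/
def pfun (a b i n : ℕ) : ℕ := ∑ m ∈ Finset.range n, sfun a b i m

/-- `p(n) = ∑_i p_i(n)`. -/
noncomputable def pTot (a b n : ℕ) : ℝ := ∑' i : ℕ, (pfun a b i n : ℝ)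

/-- `l_i`, the minimal length of a word of generation `i` of `T`. -/
noncomputable def li (a b i : ℕ) : ℕ :=
  sInf {m | ∃ s : Fin i → Bool, (node a b (List.ofFn s)).length = m}

/-- `u` is a factor of the infinite word `x`. -/
def FactorOf (u : List ℕ) (x : ℕ → ℕ) : Prop :=
  ∃ i, u = (List.range u.length).map fun j => x (i + j)

/-!
Since `a` and `b` are even, induction shows that every word of `T` is a product of squares
`x x` of letters. Feeding such a word `u = u₁u₁u₂u₂⋯uₖuₖ` into `P_{f,a}` gives
`a^a (b^{u₁} a^{u₁}) ⋯ (b^{uₖ} a^{uₖ}) b^a`, which has `a + ∑ uᵢ` letters of each kind,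
and complementation keeps the balance. So every word of `T` has as many `a`s as `b`s, whence
`|P_{f,c}(u)| = a |u|_a + b |u|_b + 2a = ((a+b)/2) |u| + 2a`; the affine recurrence
`l_{i+1} = ((a+b)/2) l_i + 2a`, `l_0 = 0`, has the stated closed form.
-/

def double {α : Type*} (l : List α) : List α := l.flatMap fun x => [x, x]

section double

variable {α : Type*}

@[simp] lemma double_nil : double ([] : List α) = [] := rfl

@[simp] lemma double_cons (x : α) (l : List α) : double (x :: l) = x :: x :: double l := rfl

lemma double_append (l₁ l₂ : List α) : double (l₁ ++ l₂) = double l₁ ++ double l₂ :=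
  List.flatMap_append

lemma map_double {β : Type*} (f : α → β) (l : List α) :
    (double l).map f = double (l.map f) := by
  induction l <;> simp [*]

lemma double_replicate (n : ℕ) (x : α) :
    double (List.replicate n x) = List.replicate (n + n) x := by
  induction n with
  | zero => rfl
  | succ n ih => simp [List.replicate_succ, ih, show n + 1 + (n + 1) = n + n + 1 + 1 by omega]

lemma replicate_mem_range_double {n : ℕ} (hn : Even n) (x : α) :
    List.replicate n x ∈ Set.range double := by
  obtain ⟨k, rfl⟩ := hn
  exact ⟨_, double_replicate k x⟩

lemma append_mem_range_double {l₁ l₂ : List α} (h₁ : l₁ ∈ Set.range double)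
    (h₂ : l₂ ∈ Set.range double) : l₁ ++ l₂ ∈ Set.range double := by
  obtain ⟨v₁, rfl⟩ := h₁
  obtain ⟨v₂, rfl⟩ := h₂
  exact ⟨v₁ ++ v₂, double_append v₁ v₂⟩

lemma map_mem_range_double {β : Type*} (f : α → β) {l : List α} (h : l ∈ Set.range double) :
    l.map f ∈ Set.range double := by
  obtain ⟨v, rfl⟩ := h
  exact ⟨v.map f, (map_double f v).symm⟩

end double

section twoLetters

variable {a b : ℕ}

lemma flip_eq_or (c : ℕ) : flip a b c = a ∨ flip a b c = b := by
  unfold flip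
  split_ifs <;> simp

lemma flip_flip (hab : a ≠ b) {c : ℕ} (hc : c = a ∨ c = b) : flip a b (flip a b c) = c := by
  rcases hc with rfl | rfl <;> simp [flip, hab.symm]

lemma count_map_flip_left (hab : a ≠ b) {w : List ℕ} (hw : ∀ x ∈ w, x = a ∨ x = b) :
    (w.map (flip a b)).count a = w.count b := by
  simp only [List.count_eq_countP, List.countP_map]
  refine List.countP_congr fun x hx => ?_
  rcases hw x hx with rfl | rfl <;> simp [flip, hab, hab.symm]

lemma count_map_flip_right (hab : a ≠ b) (w : List ℕ) :
    (w.map (flip a b)).count b = w.count a := by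
  simp only [List.count_eq_countP, List.countP_map]
  refine List.countP_congr fun x _ => ?_
  by_cases hx : x = a <;> simp [flip, hx, hab]

lemma count_add_count_eq_length (hab : a ≠ b) {w : List ℕ} (hw : ∀ x ∈ w, x = a ∨ x = b) :
    w.count a + w.count b = w.length := by
  induction w with
  | nil => rfl
  | cons x w ih =>
    have := ih fun y hy => hw y (List.mem_cons_of_mem x hy)
    rcases hw x List.mem_cons_self with rfl | rfl <;>
      simp [hab, hab.symm] <;> omega

lemma sum_eq_of_forall_eq_or (hab : a ≠ b) {w : List ℕ} (hw : ∀ x ∈ w, x = a ∨ x = b) :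
    w.sum = a * w.count a + b * w.count b := by
  induction w with
  | nil => rfl
  | cons x w ih =>
    have := ih fun y hy => hw y (List.mem_cons_of_mem x hy)
    rcases hw x List.mem_cons_self with rfl | rfl <;>
      simp [hab, hab.symm, this] <;> ring

end twoLetters

section primitives

variable {a b : ℕ}

lemma mem_pfAux {c : ℕ} (hc : c = a ∨ c = b) {u : List ℕ} {x : ℕ}
    (hx : x ∈ pfAux a b c u) : x = a ∨ x = b := by
  induction u generalizing c with
  | nil =>
    rw [pfAux] at hx
    rwa [List.eq_of_mem_replicate hx]
  | cons p u ih =>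
    rw [pfAux, List.mem_append] at hx
    rcases hx with hx | hx
    · rwa [List.eq_of_mem_replicate hx]
    · exact ih (flip_eq_or c) hx

lemma length_pfAux (c : ℕ) (u : List ℕ) : (pfAux a b c u).length = u.sum + a := by
  induction u generalizing c with
  | nil => simp [pfAux]
  | cons p u ih => simp [pfAux, ih, add_assoc]

lemma pfAux_mem_range_double (hae : Even a) {u : List ℕ} (hu : ∀ p ∈ u, Even p) (c : ℕ) :
    pfAux a b c u ∈ Set.range double := by
  induction u generalizing c with
  | nil => exact replicate_mem_range_double hae c
  | cons p u ih =>
    exact append_mem_range_double (replicate_mem_range_double (hu p List.mem_cons_self) c)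
      (ih (fun q hq => hu q (List.mem_cons_of_mem p hq)) _)

lemma count_pfAux_double (hab : a ≠ b) {c x : ℕ} (hc : c = a ∨ c = b) (hx : x = a ∨ x = b)
    (v : List ℕ) : (pfAux a b c (double v)).count x = v.sum + (List.replicate a c).count x := by
  induction v with
  | nil => simp [pfAux]
  | cons p v ih =>
    have hblock : (List.replicate p c ++ List.replicate p (flip a b c)).count x = p := by
      rcases hc with rfl | rfl <;> rcases hx with rfl | rfl <;>
        simp [List.count_replicate, flip, hab, hab.symm]
    rw [double_cons, pfAux, pfAux, flip_flip hab hc, ← List.append_assoc, List.count_append,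
      hblock, ih, List.sum_cons]
    ring

lemma mem_Pf {c : ℕ} {u : List ℕ} {x : ℕ} (hx : x ∈ Pf a b c u) : x = a ∨ x = b := by
  unfold Pf at hx
  split_ifs at hx
  · rcases List.mem_append.1 hx with hx | hx
    · exact Or.inl (List.eq_of_mem_replicate hx)
    · exact mem_pfAux (Or.inr rfl) hx
  · obtain ⟨y, -, rfl⟩ := List.mem_map.1 hx
    exact flip_eq_or y

lemma length_Pf (c : ℕ) (u : List ℕ) : (Pf a b c u).length = u.sum + 2 * a := by
  unfold Pf
  split_ifs <;> simp [length_pfAux] <;> ring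

lemma Pf_mem_range_double (hae : Even a) {u : List ℕ} (hu : ∀ p ∈ u, Even p) (c : ℕ) :
    Pf a b c u ∈ Set.range double := by
  have h := append_mem_range_double (replicate_mem_range_double hae a)
    (pfAux_mem_range_double (b := b) hae hu b)
  unfold Pf
  split_ifs
  exacts [h, map_mem_range_double _ h]

lemma Pf_of_ne {c : ℕ} (hc : c ≠ a) (u : List ℕ) :
    Pf a b c u = (Pf a b a u).map (flip a b) := by
  simp [Pf, hc]

lemma count_Pf_double (hab : a ≠ b) (c : ℕ) (v : List ℕ) :
    (Pf a b c (double v)).count a = (Pf a b c (double v)).count b := by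
  have hcount : ∀ x, x = a ∨ x = b → (Pf a b a (double v)).count x = a + v.sum := by
    intro x hx
    rw [Pf, if_pos rfl, List.count_append, count_pfAux_double hab (Or.inr rfl) hx]
    rcases hx with rfl | rfl <;> simp [List.count_replicate, hab, hab.symm, add_comm]
  by_cases hc : c = a
  · rw [hc, hcount a (Or.inl rfl), hcount b (Or.inr rfl)]
  · rw [Pf_of_ne hc, count_map_flip_left hab fun _ => mem_Pf, count_map_flip_right hab,
      hcount a (Or.inl rfl), hcount b (Or.inr rfl)]

end primitives

section tree

variable {a b : ℕ}

lemma node_balanced (hab : a ≠ b) (hae : Even a) (hbe : Even b) (s : List Bool) :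
    (∀ x ∈ node a b s, x = a ∨ x = b) ∧ node a b s ∈ Set.range double ∧
      (node a b s).count a = (node a b s).count b := by
  induction s with
  | nil => exact ⟨by simp [node], ⟨[], rfl⟩, rfl⟩
  | cons c s ih =>
    obtain ⟨hmem, ⟨v, hv⟩, -⟩ := ih
    refine ⟨fun x hx => mem_Pf hx, Pf_mem_range_double hae ?_ _, ?_⟩
    · intro p hp
      rcases hmem p hp with rfl | rfl
      exacts [hae, hbe]
    · rw [node, ← hv]
      exact count_Pf_double hab _ v

lemma two_mul_length_node_cons (hab : a ≠ b) (hae : Even a) (hbe : Even b) (c : Bool)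
    (s : List Bool) :
    2 * (node a b (c :: s)).length = (a + b) * (node a b s).length + 4 * a := by
  obtain ⟨hmem, -, hcount⟩ := node_balanced hab hae hbe s
  have hlen := count_add_count_eq_length hab hmem
  rw [node, length_Pf, sum_eq_of_forall_eq_or hab hmem, ← hlen, hcount]
  ring

end tree

lemma eq_mul_pow_length_sub_of_recurrence {R β : Type*} [CommRing R] {x : List β → R}
    {r d k : R} (h0 : x [] = 0) (hx : ∀ c s, x (c :: s) = r * x s + d) (hk : (r - 1) * k = d)
    (s : List β) : x s = k * r ^ s.length - k := by
  induction s with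
  | nil => simp [h0]
  | cons c s ih =>
    rw [hx, ih, List.length_cons, pow_succ]
    linear_combination -hk

lemma half_add_sub_one_mul_div_eq {a b : ℕ} (hab : a < b) :
    (((a : ℝ) + b) / 2 - 1) * (4 * a / ((a : ℝ) + b - 2)) = 2 * a := by
  rcases eq_or_ne ((a : ℝ) + b - 2) 0 with h | h
  -- then `a = 0`, and both sides vanish since Lean's `4 * 0 / 0` is `0`
  · have : a = 0 := by
      have : a + b = 2 := by exact_mod_cast (sub_eq_zero.1 h)
      omega
    simp [this]
  · field_simp
    ring

theorem stmt16_general (a b : ℕ) (hab : a < b) (hae : Even a) (hbe : Even b) :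
    (∀ s : List Bool, (node a b s).count a = (node a b s).count b ∧
        (node a b s).count a = (node a b s).length / 2) ∧
    (∀ i : ℕ, ∀ s : List Bool, s.length = i →
      ((node a b s).length : ℝ) =
        (4 * a / ((a : ℝ) + b - 2)) * (((a : ℝ) + b) / 2) ^ i
          - 4 * a / ((a : ℝ) + b - 2)) := by
  refine ⟨fun s => ?_, fun i s hs => ?_⟩
  · obtain ⟨hmem, -, hcount⟩ := node_balanced hab.ne hae hbe s
    have := count_add_count_eq_length hab.ne hmem
    exact ⟨hcount, by omega⟩
  · subst hs
    refine eq_mul_pow_length_sub_of_recurrence (x := fun s => ((node a b s).length : ℝ))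
      (by simp [node]) (fun c s => ?_) (half_add_sub_one_mul_div_eq hab) s
    have h : (2 * (node a b (c :: s)).length : ℝ) = (a + b) * (node a b s).length + 4 * a := by
      exact_mod_cast two_mul_length_node_cons hab.ne hae hbe c s
    linarith

theorem stmt16 (a b : ℕ) (ha : 1 ≤ a) (hab : a < b) (hae : Even a) (hbe : Even b) :
    (∀ s : List Bool, (node a b s).count a = (node a b s).count b ∧
        (node a b s).count a = (node a b s).length / 2) ∧
    (∀ i : ℕ, ∀ s : List Bool, s.length = i →
      ((node a b s).length : ℝ) =
        (4 * a / ((a : ℝ) + b - 2)) * (((a : ℝ) + b) / 2) ^ i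
          - 4 * a / ((a : ℝ) + b - 2)) :=
  stmt16_general a b hab hae hbe

end SmoothWords
end

section
/- Let {a,b} be a binary alphabet and suppose there are constants λ > 1, C > 0, D ≥ 0 with l_i ≥ Cλ^i − D − 1 for all i ≥ 0, where l_i is the minimal length of strong bispecial f-smooth words in generation i of the tree T. Then p(n) = O(n^ζ) where ζ = log(2λ)/log(λ) and p(n) = Σ_{i≥0} Σ_{m=0}^{n−1} Σ_{m'=0}^{m−1} |T_i ∩ A^{m'}|. -/
namespace SmoothWords

/-! Words of generation `i` are at least `l_i` long, so `p_i(n) = 0` once `n ≤ l_i`, while always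
`p_i(n) ≤ 2^i n`. Since `l_i` grows like `C λ^i`, only the generations `i < I` with `λ^I ≈ n / C`
contribute, whence `p(n) ≤ 2^I n ≈ n^{log_λ 2} n = n^ζ`. -/

lemma card_genSet_le (a b i : ℕ) : (genSet a b i).card ≤ 2 ^ i :=
  Finset.card_image_le.trans (by simp)

lemma sfun_le (a b i n : ℕ) : sfun a b i n ≤ 2 ^ i := by
  unfold sfun bfun
  rw [Finset.sum_card_fiberwise_eq_card_filter]
  exact (Finset.card_filter_le _ _).trans (card_genSet_le a b i)

lemma pfun_le (a b i n : ℕ) : pfun a b i n ≤ 2 ^ i * n := by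
  simpa [pfun, mul_comm] using
    Finset.sum_le_card_nsmul (Finset.range n) _ _ fun m _ => sfun_le a b i m

lemma bfun_eq_zero_of_lt_li {a b i m : ℕ} (h : m < li a b i) : bfun a b i m = 0 := by
  rw [bfun, Finset.card_eq_zero, Finset.filter_eq_empty_iff]
  rintro _ hu rfl
  obtain ⟨s, -, rfl⟩ := Finset.mem_image.mp hu
  exact h.not_ge (Nat.sInf_le ⟨s, rfl⟩)

lemma pfun_eq_zero_of_le_li {a b i n : ℕ} (h : n ≤ li a b i) : pfun a b i n = 0 :=
  Finset.sum_eq_zero fun _ hm => Finset.sum_eq_zero fun _ hm' =>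
    bfun_eq_zero_of_lt_li ((Finset.mem_range.mp hm').trans (Finset.mem_range.mp hm) |>.trans_le h)

lemma pTot_le_two_pow_mul {a b n I : ℕ} (h : ∀ i, I ≤ i → n ≤ li a b i) :
    pTot a b n ≤ 2 ^ I * n := by
  have hsum : pTot a b n = ∑ i ∈ Finset.range I, (pfun a b i n : ℝ) :=
    tsum_eq_sum fun i hi => by
      rw [pfun_eq_zero_of_le_li (h i (by simpa using hi)), Nat.cast_zero]
  have hgeom : ∑ i ∈ Finset.range I, 2 ^ i ≤ 2 ^ I :=
    (Nat.geomSum_lt le_rfl fun _ => Finset.mem_range.mp).le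
  rw [hsum]
  exact_mod_cast calc
    ∑ i ∈ Finset.range I, pfun a b i n ≤ ∑ i ∈ Finset.range I, 2 ^ i * n :=
      Finset.sum_le_sum fun i _ => pfun_le a b i n
    _ = (∑ i ∈ Finset.range I, 2 ^ i) * n := (Finset.sum_mul ..).symm
    _ ≤ 2 ^ I * n := Nat.mul_le_mul_right n hgeom

lemma rpow_logb_comm {l c x : ℝ} (hc : 0 < c) (hx : 0 < x) :
    c ^ Real.logb l x = x ^ Real.logb l c := by
  rw [Real.rpow_def_of_pos hc, Real.rpow_def_of_pos hx, Real.logb, Real.logb]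
  ring_nf

lemma exists_le_pow_and_pow_le_mul_rpow {l c x : ℝ} (hl : 1 < l) (hc : 1 ≤ c) (hx : 1 ≤ x) :
    ∃ I : ℕ, x ≤ l ^ I ∧ c ^ I ≤ c * x ^ Real.logb l c := by
  have hx0 : 0 < x := one_pos.trans_le hx
  set t := Real.logb l x
  refine ⟨⌈t⌉₊, ?_, ?_⟩
  · calc x = l ^ t := (Real.rpow_logb (by linarith) hl.ne' hx0).symm
      _ ≤ l ^ (⌈t⌉₊ : ℝ) := Real.rpow_le_rpow_of_exponent_le hl.le (Nat.le_ceil t)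
      _ = l ^ ⌈t⌉₊ := Real.rpow_natCast l _
  · calc c ^ ⌈t⌉₊ = c ^ (⌈t⌉₊ : ℝ) := (Real.rpow_natCast c _).symm
      _ ≤ c ^ (t + 1) := Real.rpow_le_rpow_of_exponent_le hc
          (Nat.ceil_lt_add_one (Real.logb_nonneg hl hx)).le
      _ = c * x ^ Real.logb l c := by
          rw [Real.rpow_add_one (by linarith), rpow_logb_comm (by linarith) hx0, mul_comm]

theorem stmt17_general (a b : ℕ) (lam C D : ℝ)
    (hlam : 1 < lam) (hC : 0 < C) (hD : 0 ≤ D)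
    (hli : ∀ i : ℕ, C * lam ^ i - D - 1 ≤ (li a b i : ℝ)) :
    ∃ K > (0 : ℝ), ∃ N : ℕ, ∀ n : ℕ, N ≤ n →
      pTot a b n ≤ K * (n : ℝ) ^ (Real.log (2 * lam) / Real.log lam) := by
  set β := Real.logb lam 2
  have hζ : Real.log (2 * lam) / Real.log lam = β + 1 := by
    rw [Real.log_mul two_ne_zero (by linarith), add_div,
      div_self (Real.log_pos hlam).ne']
    rfl
  have hβ : 0 ≤ β := Real.logb_nonneg hlam one_le_two
  refine ⟨2 * ((D + 2) / C) ^ β, by positivity, max 1 ⌈C⌉₊, fun n hn => ?_⟩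
  have hn1 : (1 : ℝ) ≤ n := by exact_mod_cast (le_max_left _ _).trans hn
  have hnC : C ≤ n := (Nat.le_ceil C).trans (by exact_mod_cast (le_max_right _ _).trans hn)
  obtain ⟨I, hxI, h2I⟩ := exists_le_pow_and_pow_le_mul_rpow (x := (n + D + 1) / C) hlam
    one_le_two (by rw [one_le_div hC]; linarith)
  have hli_ge : ∀ i, I ≤ i → n ≤ li a b i := fun i hi => by
    have : (n : ℝ) + D + 1 ≤ C * lam ^ i := by
      rw [div_le_iff₀' hC] at hxI
      exact hxI.trans (by gcongr; exact hlam.le)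
    exact_mod_cast (by linarith [hli i] : (n : ℝ) ≤ li a b i)
  have hx : (n + D + 1) / C ≤ (D + 2) / C * n := by
    rw [div_mul_eq_mul_div]
    gcongr
    nlinarith
  calc pTot a b n ≤ 2 ^ I * n := pTot_le_two_pow_mul hli_ge
    _ ≤ 2 * ((n + D + 1) / C) ^ β * n := by gcongr
    _ ≤ 2 * ((D + 2) / C * n) ^ β * n := by gcongr
    _ = 2 * ((D + 2) / C) ^ β * (n : ℝ) ^ (Real.log (2 * lam) / Real.log lam) := by
      rw [hζ, Real.mul_rpow (by positivity) (by positivity),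
        Real.rpow_add_one (by positivity)]
      ring

theorem stmt17 (a b : ℕ) (ha : 1 ≤ a) (hab : a < b) (lam C D : ℝ)
    (hlam : 1 < lam) (hC : 0 < C) (hD : 0 ≤ D)
    (hli : ∀ i : ℕ, C * lam ^ i - D - 1 ≤ (li a b i : ℝ)) :
    ∃ K > (0 : ℝ), ∃ N : ℕ, ∀ n : ℕ, N ≤ n →
      pTot a b n ≤ K * (n : ℝ) ^ (Real.log (2 * lam) / Real.log lam) :=
  stmt17_general a b lam C D hlam hC hD hli

end SmoothWords
end
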